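/- arXiv:2105.00772 — 5 statements merged into one kernel-verified Lean document; each statement's English description precedes it below -/
import Mathlib

section
/- Let M be a monoid with a topology τ and X a right M-set. Then the action X × M → X is continuous (X discrete) if and only if for each x ∈ X the equivalence relation 𝔯_x := {(p,q) ∈ M × M | x·p = x·q} is an open subset of M × M with the product topology τ × τ. -/
/-! A map into a discrete space is continuous iff it is locally constant, i.e. iff each point `m`
has a neighbourhood on which `f` agrees with `f m`; openness of the relation `f p = f q` in
`M × M` says exactly this, its slices `{n | f n = f m}` being those neighbourhoods. For the action,
`X` is discrete, so joint continuity reduces to continuity of each orbit map `act x`. -/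

theorem continuous_discrete_rng_iff_isOpen_setOf_eq {M X : Type*} [TopologicalSpace M]
    [TopologicalSpace X] [DiscreteTopology X] {f : M → X} :
    Continuous f ↔ IsOpen {pq : M × M | f pq.1 = f pq.2} := by
  constructor
  · intro hf
    exact (isOpen_discrete {p : X × X | p.1 = p.2}).preimage
      ((hf.comp continuous_fst).prodMk (hf.comp continuous_snd))
  · intro hopen
    refine continuous_discrete_rng.2 fun y => isOpen_iff_forall_mem_open.2 fun m hm => ?_
    refine ⟨{n | f n = f m}, fun n hn => hn.trans hm, ?_, rfl⟩
    exact hopen.preimage (continuous_id.prodMk continuous_const)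

theorem stmt1_general {M X : Type*} [TopologicalSpace M]
    [TopologicalSpace X] [DiscreteTopology X]
    (act : X → M → X) :
    Continuous (fun p : X × M => act p.1 p.2) ↔
      ∀ x : X, IsOpen {pq : M × M | act x pq.1 = act x pq.2} := by
  rw [continuous_prod_of_discrete_left]
  exact forall_congr' fun _ => continuous_discrete_rng_iff_isOpen_setOf_eq

theorem stmt1 {M X : Type*} [Monoid M] [TopologicalSpace M]
    [TopologicalSpace X] [DiscreteTopology X]
    (act : X → M → X)
    (act_one : ∀ x, act x 1 = x)
    (act_mul : ∀ x m n, act x (m * n) = act (act x m) n) :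
    Continuous (fun p : X × M => act p.1 p.2) ↔
      ∀ x : X, IsOpen {pq : M × M | act x pq.1 = act x pq.2} :=
  stmt1_general act
end

section
/- Let M be a monoid with a topology τ and X a right M-set. Define R(X) := {x ∈ X | for all p, q ∈ M, the set {m ∈ M | (x·q)·m = (x·q)·p} is open in τ}. Then R(X) is closed under the right M-action (x ∈ R(X) and q ∈ M imply x·q ∈ R(X)), and the restricted action R(X) × M → R(X) is continuous when R(X) is given the discrete topology. -/
theorem continuous_of_isOpen_setOf_eq {M Y : Type*} [TopologicalSpace M] [TopologicalSpace Y]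
    [DiscreteTopology Y] {f : M → Y} (hf : ∀ p, IsOpen {m | f m = f p}) : Continuous f := by
  refine continuous_discrete_rng.2 fun y => ?_
  by_cases hy : y ∈ Set.range f
  · obtain ⟨p, rfl⟩ := hy
    exact hf p
  · convert isOpen_empty
    exact Set.eq_empty_of_forall_notMem fun m hm => hy ⟨m, hm⟩

theorem stmt3 {M X : Type*} [Monoid M] [TopologicalSpace M]
    [TopologicalSpace X] [DiscreteTopology X]
    (act : X → M → X)
    (act_one : ∀ x, act x 1 = x)
    (act_mul : ∀ x m n, act x (m * n) = act (act x m) n) :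
    let S : Set X :=
      {x | ∀ p q : M, IsOpen {m : M | act (act x q) m = act (act x q) p}}
    (∀ x ∈ S, ∀ q : M, act x q ∈ S) ∧
      Continuous (fun p : (↥S) × M => act (p.1 : X) p.2) := by
  intro S
  have continuous_act : ∀ x ∈ S, Continuous (act x) := fun x hx =>
    continuous_of_isOpen_setOf_eq fun p => by simpa only [act_one] using hx p 1
  refine ⟨fun x hx q p q' => by simpa only [act_mul] using hx p (q * q'), ?_⟩
  exact continuous_prod_of_discrete_left.2 fun x => continuous_act x x.2
end

section
/- Let M be a monoid with a topology τ such that for every open set A ∈ τ and every a ∈ M: (i) a^*(A) := {k ∈ M | ak ∈ A} is open, and (ii) I_A^a := {m ∈ M | m^*(A) = a^*(A)} is open. Then the multiplication map μ : M × M → M is continuous with respect to τ. -/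
theorem Set.mul_mem_of_setOf_mul_mem_eq {M : Type*} [Mul M] {A : Set M} {a x y : M}
    (hx : {k : M | x * k ∈ A} = {k : M | a * k ∈ A}) (hy : a * y ∈ A) : x * y ∈ A :=
  show y ∈ {k : M | x * k ∈ A} from hx ▸ hy

theorem stmt8 {M : Type*} [Monoid M] [TopologicalSpace M]
    (h1 : ∀ A : Set M, IsOpen A → ∀ a : M, IsOpen {k : M | a * k ∈ A})
    (h2 : ∀ A : Set M, IsOpen A → ∀ a : M,
      IsOpen {m : M | {k : M | m * k ∈ A} = {k : M | a * k ∈ A}}) :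
    Continuous (fun p : M × M => p.1 * p.2) := by
  refine continuous_def.2 fun A hA => isOpen_prod_iff.2 fun a b hab => ?_
  exact ⟨_, _, h2 A hA a, h1 A hA a, rfl, hab,
    fun p ⟨hx, hy⟩ => Set.mul_mem_of_setOf_mul_mem_eq hx hy⟩
end

section
/- Let (M', τ') be a Hausdorff topological monoid possessing a base of open sets consisting of clopen sets U with the property that for every p ∈ M' the set {q ∈ M' | q^*(U) = p^*(U)} is open, where q^*(U) = {k | qk ∈ U}. Then for every idempotent e ∈ M' (e·e = e), the principal left ideal M'e = {me | m ∈ M'} and the principal right ideal eM' = {em | m ∈ M'} are closed subsets of M'. -/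
namespace IsIdempotentElem

variable {S : Type*} [Semigroup S] {e : S}

theorem setOf_exists_mul_right_eq (he : IsIdempotentElem e) :
    {m : S | ∃ x : S, x * e = m} = {p : S | p * e = p} := by
  ext p
  constructor
  · rintro ⟨x, rfl⟩
    exact (mul_assoc x e e).trans (congrArg (x * ·) he.eq)
  · exact fun hp => ⟨p, hp⟩

theorem setOf_exists_mul_left_eq (he : IsIdempotentElem e) :
    {m : S | ∃ x : S, e * x = m} = {p : S | e * p = p} := by
  ext p
  constructor
  · rintro ⟨x, rfl⟩
    exact (mul_assoc e e x).symm.trans (congrArg (· * x) he.eq)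
  · exact fun hp => ⟨p, hp⟩

variable [TopologicalSpace S] [ContinuousMul S] [T2Space S]

theorem isClosed_setOf_exists_mul_right_eq (he : IsIdempotentElem e) :
    IsClosed {m : S | ∃ x : S, x * e = m} := by
  rw [he.setOf_exists_mul_right_eq]
  exact isClosed_eq (continuous_mul_const e) continuous_id

theorem isClosed_setOf_exists_mul_left_eq (he : IsIdempotentElem e) :
    IsClosed {m : S | ∃ x : S, e * x = m} := by
  rw [he.setOf_exists_mul_left_eq]
  exact isClosed_eq (continuous_const_mul e) continuous_id

end IsIdempotentElem

theorem stmt12_general {M' : Type*} [Monoid M'] [TopologicalSpace M'] [ContinuousMul M']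
    [T2Space M']
    (e : M') (he : e * e = e) :
    IsClosed {m : M' | ∃ x : M', x * e = m} ∧
      IsClosed {m : M' | ∃ x : M', e * x = m} :=
  ⟨IsIdempotentElem.isClosed_setOf_exists_mul_right_eq he,
    IsIdempotentElem.isClosed_setOf_exists_mul_left_eq he⟩

theorem stmt12 {M' : Type*} [Monoid M'] [TopologicalSpace M'] [ContinuousMul M']
    [T2Space M']
    (hbase : ∃ B : Set (Set M'),
      (∀ U ∈ B, IsClopen U ∧
        ∀ p : M', IsOpen {q : M' | {k : M' | q * k ∈ U} = {k : M' | p * k ∈ U}}) ∧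
      TopologicalSpace.IsTopologicalBasis B)
    (e : M') (he : e * e = e) :
    IsClosed {m : M' | ∃ x : M', x * e = m} ∧
      IsClosed {m : M' | ∃ x : M', e * x = m} :=
  stmt12_general e he
end

section
/- Let r be a right congruence on the additive monoid ℕ (an equivalence relation such that (p,q) ∈ r implies (p+m, q+m) ∈ r for all m). If r is not the equality relation, then there exist natural numbers a ≥ 0 and b ≥ 1 such that for all m, n ∈ ℕ: (m,n) ∈ r if and only if m = n, or (m ≥ a and n ≥ a and b divides m − n). -/
/-!
The congruence classes of `ℕ` are governed by two numbers: the index `a`, the least point related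
to a larger one, and the period `b`, the least positive `d` with `x ~ x + d` for some `x`.
Translating relations to the right shows that every positive `d` with `m ~ m + d` is a multiple
of `b` (otherwise `d % b` would be a smaller period) and that `a ~ a + b`; translating and
iterating this one relation gives every `m ~ m + k * b` with `a ≤ m`.
-/

def AddCon.ofAddRight {M : Type*} [AddCommMagma M] (s : Setoid M)
    (h : ∀ a b c, s a b → s (a + c) (b + c)) : AddCon M where
  toSetoid := s
  add' {w x y z} hwx hyz := s.trans (h w x y hwx) (by
    rw [add_comm x y, add_comm x z]
    exact h y z x hyz)

namespace AddCon

variable (c : AddCon ℕ)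

-- Index and period of the monogenic monoid `ℕ ⧸ c`; both are `0` when `c` is equality.
noncomputable def natIndex : ℕ := sInf {m | ∃ d, 0 < d ∧ c m (m + d)}

noncomputable def natPeriod : ℕ := sInf {d | 0 < d ∧ ∃ m, c m (m + d)}

variable {c}

theorem exists_rel_add_pos {m n : ℕ} (hmn : c m n) (hne : m ≠ n) :
    ∃ m d, 0 < d ∧ c m (m + d) := by
  rcases Nat.lt_or_gt_of_ne hne with hlt | hlt
  · obtain ⟨d, rfl⟩ := Nat.exists_eq_add_of_lt hlt
    exact ⟨m, d + 1, d.succ_pos, by rwa [add_assoc] at hmn⟩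
  · obtain ⟨d, rfl⟩ := Nat.exists_eq_add_of_lt hlt
    exact ⟨n, d + 1, d.succ_pos, by rw [← add_assoc]; exact c.symm hmn⟩

theorem rel_add_of_le {m d x : ℕ} (h : c m (m + d)) (hx : m ≤ x) : c x (x + d) := by
  obtain ⟨k, rfl⟩ := Nat.exists_eq_add_of_le hx
  simpa only [add_right_comm m d k] using c.add h (c.refl k)

theorem rel_add_mul {m d : ℕ} (h : c m (m + d)) (k : ℕ) : c m (m + k * d) := by
  induction k with
  | zero => simpa using c.refl m
  | succ k ih =>
    rw [Nat.succ_mul, ← add_assoc]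
    exact c.trans ih (rel_add_of_le h (Nat.le_add_right m _))

theorem natIndex_le {m d : ℕ} (hd : 0 < d) (h : c m (m + d)) : c.natIndex ≤ m :=
  Nat.sInf_le ⟨d, hd, h⟩

theorem natPeriod_le {m d : ℕ} (hd : 0 < d) (h : c m (m + d)) : c.natPeriod ≤ d :=
  Nat.sInf_le ⟨hd, m, h⟩

theorem exists_rel_natIndex_add (hc : ∃ m d, 0 < d ∧ c m (m + d)) :
    ∃ d, 0 < d ∧ c c.natIndex (c.natIndex + d) :=
  Nat.sInf_mem (s := {m | ∃ d, 0 < d ∧ c m (m + d)}) hc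

theorem natPeriod_pos_and_exists_rel (hc : ∃ m d, 0 < d ∧ c m (m + d)) :
    0 < c.natPeriod ∧ ∃ m, c m (m + c.natPeriod) := by
  obtain ⟨m, d, hd, h⟩ := hc
  exact Nat.sInf_mem (s := {d | 0 < d ∧ ∃ m, c m (m + d)}) ⟨d, hd, m, h⟩

theorem natPeriod_pos (hc : ∃ m d, 0 < d ∧ c m (m + d)) : 0 < c.natPeriod :=
  (natPeriod_pos_and_exists_rel hc).1

theorem natPeriod_dvd {m d : ℕ} (h : c m (m + d)) : c.natPeriod ∣ d := by
  rcases Nat.eq_zero_or_pos d with rfl | hd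
  · exact dvd_zero _
  obtain ⟨hb, mb, hmb⟩ := natPeriod_pos_and_exists_rel ⟨m, d, hd, h⟩
  set b := c.natPeriod
  set M := max m mb
  have hM : c M (M + d) := rel_add_of_le h (le_max_left _ _)
  have hq : c M (M + d / b * b) := rel_add_mul (rel_add_of_le hmb (le_max_right _ _)) _
  have hrem : c (M + d / b * b) (M + d / b * b + d % b) := by
    rw [add_assoc, Nat.div_add_mod']
    exact c.trans (c.symm hq) hM
  by_contra hndvd
  have hmod : 0 < d % b := Nat.pos_of_ne_zero (mt Nat.dvd_of_mod_eq_zero hndvd)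
  exact absurd (natPeriod_le hmod hrem) (not_le.2 (Nat.mod_lt d hb))

theorem rel_natIndex_add_natPeriod (hc : ∃ m d, 0 < d ∧ c m (m + d)) :
    c c.natIndex (c.natIndex + c.natPeriod) := by
  set a := c.natIndex
  obtain ⟨d, hd, ha⟩ := exists_rel_natIndex_add hc
  obtain ⟨-, mb, hmb⟩ := natPeriod_pos_and_exists_rel hc
  -- both `a` and `a + b` are related to `X + b`, where `X := a + mb * d` lies beyond `mb`
  set X := a + mb * d
  have haX : c a X := rel_add_mul ha mb
  have hXb : c X (X + c.natPeriod) := 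
    rel_add_of_le hmb (le_add_left (Nat.le_mul_of_pos_right mb hd))
  have hab : c (a + c.natPeriod) (X + c.natPeriod) := c.add haX (c.refl _)
  exact c.trans (c.trans haX hXb) (c.symm hab)

theorem rel_add_iff (hc : ∃ m d, 0 < d ∧ c m (m + d)) (m d : ℕ) :
    c m (m + d) ↔ d = 0 ∨ (c.natIndex ≤ m ∧ c.natPeriod ∣ d) := by
  constructor
  · intro h
    rcases Nat.eq_zero_or_pos d with hd | hd
    · exact Or.inl hd
    · exact Or.inr ⟨natIndex_le hd h, natPeriod_dvd h⟩
  · rintro (rfl | ⟨ham, k, rfl⟩)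
    · exact c.refl m
    · rw [mul_comm]
      exact rel_add_mul (rel_add_of_le (rel_natIndex_add_natPeriod hc) ham) k

theorem rel_iff (hc : ∃ m d, 0 < d ∧ c m (m + d)) (m n : ℕ) :
    c m n ↔ m = n ∨ (c.natIndex ≤ m ∧ c.natIndex ≤ n ∧ m ≡ n [MOD c.natPeriod]) := by
  wlog hmn : m ≤ n generalizing m n
  · rw [eq_comm, Nat.ModEq.comm, and_left_comm, ← this n m (by omega)]
    exact ⟨c.symm, c.symm⟩
  obtain ⟨d, rfl⟩ := Nat.exists_eq_add_of_le hmn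
  rw [rel_add_iff hc, Nat.modEq_iff_dvd' hmn, Nat.add_sub_cancel_left, left_eq_add]
  exact or_congr_right <| and_congr_right fun ham =>
    (and_iff_right (Nat.le_add_right_of_le ham)).symm

end AddCon

theorem stmt15 (r : Set (ℕ × ℕ))
    (hrefl : ∀ m : ℕ, (m, m) ∈ r)
    (hsymm : ∀ m n : ℕ, (m, n) ∈ r → (n, m) ∈ r)
    (htrans : ∀ m n k : ℕ, (m, n) ∈ r → (n, k) ∈ r → (m, k) ∈ r)
    (hcong : ∀ p q m : ℕ, (p, q) ∈ r → (p + m, q + m) ∈ r)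
    (hne : ∃ m n : ℕ, (m, n) ∈ r ∧ m ≠ n) :
    ∃ a b : ℕ, 1 ≤ b ∧
      ∀ m n : ℕ, (m, n) ∈ r ↔
        (m = n ∨ (a ≤ m ∧ a ≤ n ∧ (b : ℤ) ∣ (m : ℤ) - (n : ℤ))) := by
  let c : AddCon ℕ := .ofAddRight
    ⟨fun m n => (m, n) ∈ r, ⟨hrefl, hsymm _ _, htrans _ _ _⟩⟩ hcong
  obtain ⟨p, q, hpq, hpq_ne⟩ := hne
  have hc := AddCon.exists_rel_add_pos (c := c) hpq hpq_ne
  refine ⟨c.natIndex, c.natPeriod, AddCon.natPeriod_pos hc, fun m n => ?_⟩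
  rw [← Nat.modEq_iff_dvd, Nat.ModEq.comm]
  exact AddCon.rel_iff hc m n
end
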